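/- Let A be a k-algebra with a symmetric, associative, non-degenerate bilinear form ⟨·,·⟩_A, and let Σ_w carry the form ⟨σ,τ⟩ = δ_{σ,τ⁻¹}. Then the bilinear form on the wreath product A ≀ Σ_w defined by ⟨x₁ ⊗ ⋯ ⊗ x_w ⊗ σ, y₁ ⊗ ⋯ ⊗ y_w ⊗ τ⟩ = ⟨x₁, y_{σ⁻¹(1)}⟩⋯⟨x_w, y_{σ⁻¹(w)}⟩⟨σ,τ⟩ is symmetric, associative, and non-degenerate; hence A ≀ Σ_w is a symmetric algebra whenever A is. -/

import Mathlib

/-!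
Statement 3: Let `A` be a `k`-algebra with a symmetric, associative, non-degenerate
bilinear form `φ`, and let `Σ_w` carry the form `⟨σ,τ⟩ = δ_{σ,τ⁻¹}`.  Then the bilinear
form on the wreath product `A ≀ Σ_w` defined by
`⟨x₁ ⊗ ⋯ ⊗ x_w ⊗ σ, y₁ ⊗ ⋯ ⊗ y_w ⊗ τ⟩ = ⟨x₁, y_{σ⁻¹ 1}⟩ ⋯ ⟨x_w, y_{σ⁻¹ w}⟩ ⟨σ, τ⟩`
is symmetric, associative and non-degenerate; hence `A ≀ Σ_w` is a symmetric algebra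
whenever `A` is.

The wreath product `A ≀ Σ_w` is modelled as `Σ_w →₀ A^{⊗w}` (i.e. `⊕_{σ} A^{⊗w} ⊗ σ`)
with multiplication
`(x ⊗ σ)·(y ⊗ τ) = (x₁ y_{σ⁻¹ 1} ⊗ ⋯ ⊗ x_w y_{σ⁻¹ w}) ⊗ στ`.
-/

open scoped TensorProduct
open PiTensorProduct

noncomputable section

variable (k : Type*) [Field k] (A : Type*) [Ring A] [Algebra k A] (w : ℕ)

/-- The `w`-fold tensor power `A^{⊗ w}` (a ring, with componentwise product). -/
abbrev TPow := ⨂[k] (_ : Fin w), A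

/-- The wreath product `A ≀ Σ_w = A^{⊗w} ⊗ kΣ_w`, as a `k`-module. -/
abbrev Wreath := Equiv.Perm (Fin w) →₀ TPow k A w

variable {k A w}

/-- The place-permutation action of `σ ∈ Σ_w` on `A^{⊗w}`:
`σ • (y₁ ⊗ ⋯ ⊗ y_w) = y_{σ⁻¹ 1} ⊗ ⋯ ⊗ y_{σ⁻¹ w}`. -/
def permAct (σ : Equiv.Perm (Fin w)) : TPow k A w ≃ₗ[k] TPow k A w :=
  PiTensorProduct.reindex k (fun _ : Fin w => A) σ

/-- The wreath product multiplication: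
`(x ⊗ σ)(y ⊗ τ) = (x₁ y_{σ⁻¹ 1} ⊗ ⋯ ⊗ x_w y_{σ⁻¹ w}) ⊗ στ`. -/
def wmul (f g : Wreath k A w) : Wreath k A w :=
  f.sum fun σ x => g.sum fun τ y => Finsupp.single (σ * τ) (x * permAct σ y)

/-- The product of the pairings `φ` on the tensor power:
`Φ(x₁ ⊗ ⋯ ⊗ x_w, y₁ ⊗ ⋯ ⊗ y_w) = ∏ i, φ (x i) (y i)`. -/
def tpowForm (φ : A →ₗ[k] A →ₗ[k] k) : TPow k A w →ₗ[k] TPow k A w →ₗ[k] k :=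
  LinearMap.comp
    (LinearMap.llcomp k (TPow k A w) (⨂[k] (_ : Fin w), k) k
      (PiTensorProduct.lift (MultilinearMap.mkPiAlgebra k (Fin w) k)))
    (LinearMap.comp PiTensorProduct.piTensorHomMap
      (PiTensorProduct.map fun _ : Fin w => φ))

/-- The bilinear form on the wreath product:
`⟨x ⊗ σ, y ⊗ τ⟩ = (∏ i, φ (x i) (y (σ⁻¹ i))) · δ_{σ, τ⁻¹}`, i.e. the `τ = σ⁻¹`
component of `g` is paired against the `σ` component of `f`. -/
def wform (φ : A →ₗ[k] A →ₗ[k] k) (f g : Wreath k A w) : k :=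
  f.sum fun σ x => tpowForm φ x (permAct σ (g σ⁻¹))

/-
Writing `Φ` for the product form `∏ᵢ φ(xᵢ, yᵢ)` on `A^{⊗w}`, the wreath form is
`⟨f, g⟩ = ∑_σ Φ(f_σ, σ·g_{σ⁻¹})`. Since `Φ` is invariant under place permutations and
inherits symmetry and associativity from `φ` factorwise, symmetry of `⟨·,·⟩` follows by
reindexing `σ ↦ σ⁻¹` and associativity by reindexing `τ = σ⁻¹ρ`. Non-degeneracy of `Φ` is
proved by induction on `w` through `A^{⊗(n+1)} ≅ A^{⊗n} ⊗ A`: over a field, the tensor product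
of left-separating forms is left-separating (expand in a basis of one factor). Pairing `f`
against `g` supported at `π⁻¹` isolates `Φ(f_π, ·)`, so `⟨·,·⟩` is non-degenerate too.
-/

theorem LinearMap.BilinForm.separatingLeft_tmul {K M N : Type*} [Field K]
    [AddCommGroup M] [Module K M] [AddCommGroup N] [Module K N]
    {B₁ : LinearMap.BilinForm K M} {B₂ : LinearMap.BilinForm K N}
    (h₁ : B₁.SeparatingLeft) (h₂ : B₂.SeparatingLeft) : (B₁.tmul B₂).SeparatingLeft := by
  intro x hx
  let b := Module.Basis.ofVectorSpace K M
  obtain ⟨c, rfl⟩ := TensorProduct.eq_repr_basis_left b x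
  suffices c = 0 by simp [this]
  ext i
  refine h₂ (c i) fun n => ?_
  have hc : Finsupp.linearCombination K b (c.mapRange (B₂ · n) (map_zero₂ B₂ n)) = 0 :=
    h₁ _ fun m => by
      simpa [Finsupp.linearCombination_apply, Finsupp.sum_mapRange_index, map_finsuppSum] using
        hx (m ⊗ₜ n)
  simpa using DFunLike.congr_fun (b.linearIndependent (hc.trans (map_zero _).symm)) i

section

variable (φ : A →ₗ[k] A →ₗ[k] k)

@[simp]
lemma tpowForm_tprod (x y : Fin w → A) :
    tpowForm φ (tprod k x) (tprod k y) = ∏ i, φ (x i) (y i) := by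
  simp [tpowForm]

variable (k A) in
def tpowSuccEquiv (n : ℕ) : TPow k A n ⊗[k] A ≃ₗ[k] TPow k A (n + 1) :=
  (TensorProduct.congr (LinearEquiv.refl k _) (subsingletonEquiv 0).symm).trans TensorPower.mulEquiv

@[simp]
lemma tpowSuccEquiv_tprod_tmul {n : ℕ} (x : Fin n → A) (a : A) :
    tpowSuccEquiv k A n (tprod k x ⊗ₜ a) = PiTensorProduct.tprod k (Fin.snoc x a) := by
  simp only [tpowSuccEquiv, TensorPower.mulEquiv, LinearEquiv.trans_apply,
    TensorProduct.congr_tmul, LinearEquiv.refl_apply, subsingletonEquiv_symm_apply',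
    tmulEquiv_apply, reindex_tprod]
  congr 1 with i
  induction i using Fin.lastCases <;> simp

attribute [local ext] TensorProduct.ext in
lemma tpowForm_succ (n : ℕ) :
    (tpowForm φ).compl₁₂ (tpowSuccEquiv k A n).toLinearMap (tpowSuccEquiv k A n).toLinearMap =
      LinearMap.BilinForm.tmul (tpowForm (w := n) φ) φ := by
  ext x a y b
  simp [Fin.prod_univ_castSucc, mul_comm]

lemma tpowForm_separatingLeft (hφ : φ.SeparatingLeft) :
    ∀ n, (tpowForm (w := n) φ).SeparatingLeft
  | 0 => fun x hx => by
    have h : (tpowForm φ).flip (tprod k Fin.elim0) = (isEmptyEquiv (Fin 0)).toLinearMap := by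
      ext; simp
    simpa using congr($h x).symm.trans (hx _)
  | n + 1 => fun x hx => by
    refine (tpowSuccEquiv k A n).symm.map_eq_zero_iff.mp <|
      LinearMap.BilinForm.separatingLeft_tmul (tpowForm_separatingLeft hφ n) hφ _ fun y => ?_
    simpa [← tpowForm_succ] using hx (tpowSuccEquiv k A n y)

@[simp]
lemma permAct_tprod (σ : Equiv.Perm (Fin w)) (y : Fin w → A) :
    permAct (k := k) σ (tprod k y) = tprod k fun i => y (σ⁻¹ i) := by
  simp [permAct]

lemma permAct_mul (σ τ : Equiv.Perm (Fin w)) (x : TPow k A w) :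
    permAct (σ * τ) x = permAct σ (permAct τ x) :=
  (reindex_reindex τ σ x).symm

@[simp]
lemma permAct_one (x : TPow k A w) : permAct 1 x = x :=
  congr($reindex_refl x)

lemma permAct_map_mul (σ : Equiv.Perm (Fin w)) (x y : TPow k A w) :
    permAct σ (x * y) = permAct σ x * permAct σ y := by
  induction x using PiTensorProduct.induction_on with
  | smul_tprod r a =>
    induction y using PiTensorProduct.induction_on with
    | smul_tprod s b => simp [tprod_mul_tprod, Pi.mul_def]
    | add y y' hy hy' => simp only [mul_add, map_add, hy, hy']
  | add x x' hx hx' => simp only [add_mul, map_add, hx, hx']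

lemma tpowForm_comm (hsymm : ∀ a b : A, φ a b = φ b a) (x y : TPow k A w) :
    tpowForm φ x y = tpowForm φ y x := by
  suffices tpowForm φ = (tpowForm (w := w) φ).flip from congr($this x y)
  ext x y
  simp [hsymm]

lemma tpowForm_permAct_permAct (σ : Equiv.Perm (Fin w)) (x y : TPow k A w) :
    tpowForm φ (permAct σ x) (permAct σ y) = tpowForm φ x y := by
  suffices (tpowForm φ).compl₁₂ (permAct σ).toLinearMap (permAct σ).toLinearMap =
      tpowForm (w := w) φ from congr($this x y)
  ext x y
  simpa using σ.symm.prod_comp fun i => φ (x i) (y i)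

lemma tpowForm_mul_assoc (hassoc : ∀ a b c : A, φ (a * b) c = φ a (b * c))
    (x y z : TPow k A w) :
    tpowForm φ (x * y) z = tpowForm φ x (y * z) := by
  induction x using PiTensorProduct.induction_on with
  | smul_tprod r a =>
    induction y using PiTensorProduct.induction_on with
    | smul_tprod s b =>
      induction z using PiTensorProduct.induction_on with
      | smul_tprod t c => simp [tprod_mul_tprod, hassoc]
      | add z z' hz hz' => simp only [mul_add, map_add, hz, hz']
    | add y y' hy hy' => simp only [mul_add, add_mul, map_add, LinearMap.add_apply, hy, hy']
  | add x x' hx hx' => simp only [add_mul, map_add, LinearMap.add_apply, hx, hx']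

lemma wform_eq_sum (f g : Wreath k A w) :
    wform φ f g = ∑ σ, tpowForm φ (f σ) (permAct σ (g σ⁻¹)) :=
  Finsupp.sum_fintype _ _ fun σ => by simp

lemma wmul_apply (f g : Wreath k A w) (ρ : Equiv.Perm (Fin w)) :
    wmul f g ρ = ∑ σ, f σ * permAct σ (g (σ⁻¹ * ρ)) := by
  simp [wmul, Finsupp.sum_fintype, Finsupp.single_apply, ← eq_inv_mul_iff_mul_eq]

lemma wform_comm (hsymm : ∀ a b : A, φ a b = φ b a) (f g : Wreath k A w) :
    wform φ f g = wform φ g f := by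
  rw [wform_eq_sum, wform_eq_sum]
  refine Fintype.sum_equiv (Equiv.inv _) _ _ fun σ => ?_
  calc tpowForm φ (f σ) (permAct σ (g σ⁻¹))
      = tpowForm φ (permAct σ⁻¹ (f σ)) (g σ⁻¹) := by
        rw [← tpowForm_permAct_permAct φ σ⁻¹, ← permAct_mul, inv_mul_cancel, permAct_one]
    _ = tpowForm φ (g σ⁻¹) (permAct σ⁻¹ (f σ⁻¹⁻¹)) := by rw [tpowForm_comm φ hsymm, inv_inv]

lemma wform_wmul_assoc (hassoc : ∀ a b c : A, φ (a * b) c = φ a (b * c))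
    (f g h : Wreath k A w) :
    wform φ (wmul f g) h = wform φ f (wmul g h) := by
  calc wform φ (wmul f g) h
      = ∑ ρ, ∑ σ, tpowForm φ (f σ) (permAct σ (g (σ⁻¹ * ρ)) * permAct ρ (h ρ⁻¹)) := by
        simp [wform_eq_sum, wmul_apply, tpowForm_mul_assoc φ hassoc]
    _ = ∑ σ, ∑ τ, tpowForm φ (f σ) (permAct σ (g τ) * permAct (σ * τ) (h (σ * τ)⁻¹)) := by
        rw [Finset.sum_comm]
        refine Fintype.sum_congr _ _ fun σ => Fintype.sum_equiv (Equiv.mulLeft σ⁻¹) _ _ fun ρ => ?_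
        simp
    _ = wform φ f (wmul g h) := by
        simp [wform_eq_sum, wmul_apply, permAct_map_mul, permAct_mul]

lemma eq_zero_of_forall_wform_eq_zero (hφ : φ.SeparatingLeft) (f : Wreath k A w)
    (h : ∀ g : Wreath k A w, wform φ f g = 0) : f = 0 := by
  ext π
  refine tpowForm_separatingLeft φ hφ w (f π) fun z => ?_
  simpa [wform_eq_sum, Finsupp.single_apply, apply_ite] using
    h (Finsupp.single π⁻¹ ((permAct π).symm z))

end

/-- If `φ` is a symmetric, associative, non-degenerate bilinear form
on `A`, then the induced bilinear form on the wreath product `A ≀ Σ_w` is symmetric,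
associative and non-degenerate; hence `A ≀ Σ_w` is a symmetric algebra whenever `A` is. -/
theorem wreath_symmetricAlgebra
    (φ : A →ₗ[k] A →ₗ[k] k)
    (hsymm : ∀ a b : A, φ a b = φ b a)
    (hassoc : ∀ a b c : A, φ (a * b) c = φ a (b * c))
    (hnd : ∀ a : A, (∀ b : A, φ a b = 0) → a = 0) :
    (∀ f g : Wreath k A w, wform φ f g = wform φ g f)
    ∧ (∀ f g h : Wreath k A w, wform φ (wmul f g) h = wform φ f (wmul g h))
    ∧ (∀ f : Wreath k A w, (∀ g : Wreath k A w, wform φ f g = 0) → f = 0) :=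
  ⟨wform_comm φ hsymm, wform_wmul_assoc φ hassoc, eq_zero_of_forall_wform_eq_zero φ hnd⟩

end
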